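/- arXiv:1501.02752 — 3 statements merged into one kernel-verified Lean document; each statement's English description precedes it below -/
import Mathlib

section
/- Let E be a finite-dimensional real normed vector space, let p ∈ E, and let φ, ψ : E → E be twice continuously differentiable maps with φ(p) = 0 and ψ(p) = 0. Suppose the Lie bracket of φ and ψ vanishes identically, i.e., for every x ∈ E, (Dψ)(x)(φ(x)) − (Dφ)(x)(ψ(x)) = 0, where Dφ(x) denotes the Fréchet derivative of φ at x. Then the linear maps Dφ(p) and Dψ(p) commute: Dφ(p) ∘ Dψ(p) = Dψ(p) ∘ Dφ(p). -/
/-! Differentiating the identity `Dψ(x)(φ x) = Dφ(x)(ψ x)` at `p` with the product rule, the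
terms involving second derivatives are applied to `φ p = 0` and `ψ p = 0` and drop out, leaving
`Dψ(p) ∘ Dφ(p) = Dφ(p) ∘ Dψ(p)`. -/

section

variable {𝕜 : Type*} [NontriviallyNormedField 𝕜]
  {E F G : Type*} [NormedAddCommGroup E] [NormedSpace 𝕜 E] [NormedAddCommGroup F]
  [NormedSpace 𝕜 F] [NormedAddCommGroup G] [NormedSpace 𝕜 G]

theorem HasFDerivAt.clm_apply_of_eq_zero {A : E → F →L[𝕜] G} {A' : E →L[𝕜] F →L[𝕜] G}
    {v : E → F} {v' : E →L[𝕜] F} {p : E} (hA : HasFDerivAt A A' p) (hv : HasFDerivAt v v' p)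
    (hv0 : v p = 0) : HasFDerivAt (fun x => A x (v x)) ((A p).comp v') p := by
  simpa [hv0] using hA.clm_apply hv

theorem hasFDerivAt_fderiv_apply_of_eq_zero {φ : E → E} {ψ : E → F} {p : E}
    (hψ : ContDiff 𝕜 2 ψ) (hφ : DifferentiableAt 𝕜 φ p) (hφp : φ p = 0) :
    HasFDerivAt (fun x => fderiv 𝕜 ψ x (φ x)) ((fderiv 𝕜 ψ p).comp (fderiv 𝕜 φ p)) p :=
  have hDψ : ContDiff 𝕜 1 (fderiv 𝕜 ψ) := hψ.fderiv_right (by norm_num)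
  (hDψ.differentiable one_ne_zero p).hasFDerivAt.clm_apply_of_eq_zero hφ.hasFDerivAt hφp

end

theorem commuting_vector_fields_linearizations_commute_general
    {E : Type*} [NormedAddCommGroup E] [NormedSpace ℝ E]
    (p : E) (φ ψ : E → E) (hφ : ContDiff ℝ 2 φ) (hψ : ContDiff ℝ 2 ψ)
    (hφp : φ p = 0) (hψp : ψ p = 0)
    (hbracket : ∀ x : E, fderiv ℝ ψ x (φ x) - fderiv ℝ φ x (ψ x) = 0) :
    (fderiv ℝ φ p).comp (fderiv ℝ ψ p) = (fderiv ℝ ψ p).comp (fderiv ℝ φ p) := by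
  have hDψφ := hasFDerivAt_fderiv_apply_of_eq_zero hψ (hφ.differentiable two_ne_zero p) hφp
  have hDφψ := hasFDerivAt_fderiv_apply_of_eq_zero hφ (hψ.differentiable two_ne_zero p) hψp
  have hsame : (fun x => fderiv ℝ ψ x (φ x)) = fun x => fderiv ℝ φ x (ψ x) :=
    funext fun x => sub_eq_zero.mp (hbracket x)
  rw [hsame] at hDψφ
  exact hDφψ.unique hDψφ

/-- If two C² vector fields on a finite-dimensional real normed space have vanishing
Lie bracket and both vanish at `p`, then their linearizations at `p` commute. -/
theorem commuting_vector_fields_linearizations_commute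
    {E : Type*} [NormedAddCommGroup E] [NormedSpace ℝ E] [FiniteDimensional ℝ E]
    (p : E) (φ ψ : E → E) (hφ : ContDiff ℝ 2 φ) (hψ : ContDiff ℝ 2 ψ)
    (hφp : φ p = 0) (hψp : ψ p = 0)
    (hbracket : ∀ x : E, fderiv ℝ ψ x (φ x) - fderiv ℝ φ x (ψ x) = 0) :
    (fderiv ℝ φ p).comp (fderiv ℝ ψ p) = (fderiv ℝ ψ p).comp (fderiv ℝ φ p) :=
  commuting_vector_fields_linearizations_commute_general p φ ψ hφ hψ hφp hψp hbracket
end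

section
/- Let L₁, …, L_m be pairwise commuting real antisymmetric n×n matrices (L_Λᵀ = −L_Λ and L_Λ L_Γ = L_Γ L_Λ for all Λ, Γ). Then there exist a natural number r with 2r ≤ n, vectors x₁, y₁, …, x_r, y_r in ℝⁿ forming an orthonormal family of 2r vectors, and real numbers λ_{Λα} (1 ≤ Λ ≤ m, 1 ≤ α ≤ r) such that L_Λ = Σ_{α=1}^{r} λ_{Λα} (y_α x_αᵀ − x_α y_αᵀ) for every Λ. Moreover, if the matrices L₁, …, L_m are linearly independent over ℝ, then the m rows of the matrix (λ_{Λα}) are linearly independent, and in particular m ≤ r ≤ ⌊n/2⌋. -/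
/-!
For commuting skew-adjoint `T i`, every product `T i * T j` is self-adjoint and commutes with the
family, so on a minimal nonzero invariant subspace `W` it acts as a scalar (its eigenspaces meet
`W` in invariant subspaces). If some `T i₀` does not vanish on `W`, then `T i₀ ^ 2` is a negative
scalar `c` on `W` and each `T i` is a multiple of `T i₀` there. Rescaling `T i₀` by `(√-c)⁻¹` gives
a complex structure `J`; for a unit vector `x ∈ W` the plane spanned by `x, J x` is invariant,
hence equals `W`, and every `T i` acts on it as a multiple of the rotation generator of that plane.
Since the `T i` are skew, `Wᗮ` is invariant as well, and induction over invariant subspaces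
collects the orthonormal planes.
-/

open Matrix Module End Submodule Set
open scoped RealInnerProductSpace

lemma IsSelfAdjoint.mul_of_mem_skewAdjoint {R : Type*} [Ring R] [StarRing R] {a b : R}
    (ha : a ∈ skewAdjoint R) (hb : b ∈ skewAdjoint R) (hab : Commute a b) :
    IsSelfAdjoint (a * b) := by
  rw [IsSelfAdjoint, star_mul, skewAdjoint.mem_iff.mp ha, skewAdjoint.mem_iff.mp hb,
    neg_mul_neg, hab.eq]

lemma LinearMap.eqOn_add_of_eqOn_sup {R M N : Type*} [Semiring R] [AddCommMonoid M]
    [AddCommMonoid N] [Module R M] [Module R N] {f A B : M →ₗ[R] N} {U U' : Submodule R M}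
    (hA : EqOn f A U) (hB : EqOn f B U') (hA' : EqOn A 0 U') (hB' : EqOn B 0 U) :
    EqOn f ⇑(A + B) ↑(U ⊔ U') := by
  intro v hv
  obtain ⟨p, hp, q, hq, rfl⟩ := mem_sup.mp hv
  simp [hA hp, hB hq, hA' hq, hB' hp]

lemma LinearIndependent.of_eq_linearCombination {R M κ ι : Type*} [Ring R] [AddCommGroup M]
    [Module R M] [Fintype κ] {L : ι → M} {c : ι → κ → R} {B : κ → M}
    (hL : ∀ i, L i = ∑ α, c i α • B α) (h : LinearIndependent R L) : LinearIndependent R c :=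
  .of_comp (Fintype.linearCombination R B) <| by
    convert h
    ext
    simp [hL, Fintype.linearCombination_apply]

section MinimalInvariant

variable {R M ι : Type*} [Semiring R] [AddCommMonoid M] [Module R M]

def IsMinimalInvariant (T : ι → End R M) (W : Submodule R M) : Prop :=
  Minimal (fun U : Submodule R M => U ≠ ⊥ ∧ ∀ i, U ∈ invtSubmodule (T i)) W

lemma exists_isMinimalInvariant_le [WellFoundedLT (Submodule R M)] {T : ι → End R M}
    {V : Submodule R M} (hV_ne : V ≠ ⊥) (hV : ∀ i, V ∈ invtSubmodule (T i)) :
    ∃ W ≤ V, IsMinimalInvariant T W :=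
  exists_minimal_le_of_wellFoundedLT _ V ⟨hV_ne, hV⟩

end MinimalInvariant

section InnerProductSpace

variable {E : Type*} [NormedAddCommGroup E] [InnerProductSpace ℝ E]

lemma Submodule.orthogonal_inf_lt {W V : Submodule ℝ E} (hWV : W ≤ V) (hW : W ≠ ⊥) :
    Wᗮ ⊓ V < V := by
  refine lt_of_le_of_ne inf_le_right fun h => hW ?_
  rw [eq_bot_iff, ← W.inf_orthogonal_eq_bot]
  exact le_inf le_rfl ((hWV.trans h.ge).trans inf_le_left)

lemma orthonormal_pair_iff {x y : E} :
    Orthonormal ℝ ![x, y] ↔ ⟪x, x⟫ = 1 ∧ ⟪y, y⟫ = 1 ∧ ⟪x, y⟫ = 0 := by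
  rw [orthonormal_iff_ite]
  simp [Fin.forall_fin_two, real_inner_comm x y]
  tauto

lemma Orthonormal.sumElim_cons {K : Submodule ℝ E} {r : ℕ} {x y : E} {x' y' : Fin r → E}
    (h : Orthonormal ℝ ![x, y]) (h' : Orthonormal ℝ (Sum.elim x' y')) (hx : x ∈ K) (hy : y ∈ K)
    (hx' : ∀ α, x' α ∈ Kᗮ) (hy' : ∀ α, y' α ∈ Kᗮ) :
    Orthonormal ℝ (Sum.elim (Fin.cons x x' : Fin (r + 1) → E) (Fin.cons y y')) := by
  obtain ⟨hxx, hyy, hxy⟩ := orthonormal_pair_iff.mp h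
  rw [orthonormal_iff_ite] at h' ⊢
  have hx'x' (α β) : ⟪x' α, x' β⟫ = if α = β then 1 else 0 := by simpa using h' (.inl α) (.inl β)
  have hx'y' (α β) : ⟪x' α, y' β⟫ = 0 := by simpa using h' (.inl α) (.inr β)
  have hy'x' (α β) : ⟪y' α, x' β⟫ = 0 := by simpa using h' (.inr α) (.inl β)
  have hy'y' (α β) : ⟪y' α, y' β⟫ = if α = β then 1 else 0 := by simpa using h' (.inr α) (.inr β)
  rintro (i | i) (j | j) <;> cases i using Fin.cases <;> cases j using Fin.cases <;>
    simp only [Sum.elim_inl, Sum.elim_inr, Fin.cons_zero, Fin.cons_succ, Sum.inl.injEq,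
      Sum.inr.injEq, reduceCtorEq, if_false, if_true, Fin.succ_inj, Fin.succ_ne_zero,
      (Fin.succ_ne_zero _).symm, hxx, hyy, hxy, real_inner_comm x y, hx'x', hx'y', hy'x', hy'y',
      inner_right_of_mem_orthogonal hx (hx' _), inner_right_of_mem_orthogonal hx (hy' _),
      inner_right_of_mem_orthogonal hy (hx' _), inner_right_of_mem_orthogonal hy (hy' _),
      inner_left_of_mem_orthogonal hx (hx' _), inner_left_of_mem_orthogonal hx (hy' _),
      inner_left_of_mem_orthogonal hy (hx' _), inner_left_of_mem_orthogonal hy (hy' _)]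

/-- The paper's `y xᵀ - x yᵀ`, the infinitesimal rotation of the plane of `x` and `y`. -/
noncomputable def rotationGenerator (x y : E) : E →ₗ[ℝ] E :=
  ((InnerProductSpace.rankOne ℝ y x - InnerProductSpace.rankOne ℝ x y : E →L[ℝ] E) : E →ₗ[ℝ] E)

lemma rotationGenerator_apply (x y v : E) :
    rotationGenerator x y v = ⟪x, v⟫ • y - ⟪y, v⟫ • x := by
  simp [rotationGenerator, InnerProductSpace.rankOne_apply]

lemma rotationGenerator_apply_left {x y : E} (h : Orthonormal ℝ ![x, y]) :
    rotationGenerator x y x = y := by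
  obtain ⟨hxx, -, hxy⟩ := orthonormal_pair_iff.mp h
  rw [rotationGenerator_apply, hxx, real_inner_comm x y, hxy, one_smul, zero_smul, sub_zero]

lemma rotationGenerator_apply_right {x y : E} (h : Orthonormal ℝ ![x, y]) :
    rotationGenerator x y y = -x := by
  obtain ⟨-, hyy, hxy⟩ := orthonormal_pair_iff.mp h
  rw [rotationGenerator_apply, hyy, hxy, one_smul, zero_smul, zero_sub]

lemma rotationGenerator_apply_mem_span (x y v : E) :
    rotationGenerator x y v ∈ span ℝ {x, y} := by
  rw [rotationGenerator_apply]
  exact sub_mem (smul_mem _ _ (subset_span (by simp))) (smul_mem _ _ (subset_span (by simp)))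

lemma rotationGenerator_eqOn_zero {K : Submodule ℝ E} {x y : E} (hx : x ∈ Kᗮ) (hy : y ∈ Kᗮ) :
    EqOn (rotationGenerator x y) 0 K := fun v hv => by
  simp [rotationGenerator_apply, inner_left_of_mem_orthogonal hv hx,
    inner_left_of_mem_orthogonal hv hy]

lemma sum_rotationGenerator_eqOn_zero {κ : Type*} [Fintype κ] {K : Submodule ℝ E}
    {x y : κ → E} (hx : ∀ α, x α ∈ Kᗮ) (hy : ∀ α, y α ∈ Kᗮ) (μ : κ → ℝ) :
    EqOn ⇑(∑ α, μ α • rotationGenerator (x α) (y α)) 0 K := fun v hv => by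
  simp [rotationGenerator_eqOn_zero (hx _) (hy _) hv]

end InnerProductSpace

section SkewAdjoint

variable {E : Type*} [NormedAddCommGroup E] [InnerProductSpace ℝ E] [FiniteDimensional ℝ E]

lemma inner_map_eq_neg_of_mem_skewAdjoint {T : End ℝ E} (hT : T ∈ skewAdjoint (End ℝ E))
    (u v : E) : ⟪T u, v⟫ = -⟪u, T v⟫ := by
  rw [← LinearMap.adjoint_inner_right, ← LinearMap.star_eq_adjoint, skewAdjoint.mem_iff.mp hT,
    LinearMap.neg_apply, inner_neg_right]

lemma orthogonal_mem_invtSubmodule_of_mem_skewAdjoint {T : End ℝ E}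
    (hT : T ∈ skewAdjoint (End ℝ E)) {W : Submodule ℝ E} (hW : W ∈ invtSubmodule T) :
    Wᗮ ∈ invtSubmodule T := by
  refine mem_invtSubmodule_adjoint_iff.mp ?_
  rw [← LinearMap.star_eq_adjoint, skewAdjoint.mem_iff.mp hT]
  exact fun w hw => W.neg_mem (hW hw)

lemma orthonormal_pair_of_mem_skewAdjoint {J : End ℝ E} (hJ : J ∈ skewAdjoint (End ℝ E)) {x : E}
    (hx : ‖x‖ = 1) (hJJ : J (J x) = -x) : Orthonormal ℝ ![x, J x] := by
  have hxx : ⟪x, x⟫ = 1 := by rw [real_inner_self_eq_norm_sq, hx, one_pow]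
  refine orthonormal_pair_iff.mpr ⟨hxx, ?_, ?_⟩
  · rw [inner_map_eq_neg_of_mem_skewAdjoint hJ, hJJ, inner_neg_right, neg_neg, hxx]
  · have := inner_map_eq_neg_of_mem_skewAdjoint hJ x x
    rw [real_inner_comm] at this
    linarith

variable {ι : Type*} {T : ι → End ℝ E} {W : Submodule ℝ E}

lemma IsMinimalInvariant.exists_le_eigenspace (hW : IsMinimalInvariant T W) {S : End ℝ E}
    (hS : S.IsSymmetric) (hSW : W ∈ invtSubmodule S) (hST : ∀ i, Commute S (T i)) :
    ∃ c, W ≤ eigenspace S c := by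
  have : Nontrivial W := nontrivial_iff_ne_bot.mpr hW.prop.1
  obtain ⟨c, hc⟩ : ∃ c, HasEigenvalue (S.restrict hSW) c :=
    ⟨_, (hS.restrict_invariant hSW).hasEigenvalue_iSup_of_finiteDimensional⟩
  obtain ⟨w, hw⟩ := hc.exists_hasEigenvector
  have hU_ne_bot : W ⊓ eigenspace S c ≠ ⊥ :=
    (Submodule.ne_bot_iff _).mpr ⟨w, ⟨w.2, mem_eigenspace_iff.mpr
      (congrArg Subtype.val hw.apply_eq_smul)⟩, by simpa using hw.2⟩
  have hU_inv : ∀ i, W ⊓ eigenspace S c ∈ invtSubmodule (T i) := fun i v hv =>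
    ⟨hW.prop.2 i hv.1, mapsTo_genEigenspace_of_comm (hST i) c 1 hv.2⟩
  exact ⟨c, (hW.2 ⟨hU_ne_bot, hU_inv⟩ inf_le_left).trans inf_le_right⟩

lemma IsMinimalInvariant.exists_complexStructure (hskew : ∀ i, T i ∈ skewAdjoint (End ℝ E))
    (hcomm : ∀ i j, Commute (T i) (T j)) (hW : IsMinimalInvariant T W) {i₀ : ι} {w₀ : E}
    (hw₀ : w₀ ∈ W) (hTw₀ : T i₀ w₀ ≠ 0) :
    ∃ J ∈ skewAdjoint (End ℝ E), W ∈ invtSubmodule J ∧ (∀ w ∈ W, J (J w) = -w) ∧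
      ∃ a : ι → ℝ, ∀ i, EqOn (T i) ⇑(a i • J) W := by
  have hWinv := hW.prop.2
  have hd : ∀ i, ∃ d, W ≤ eigenspace (T i * T i₀) d := fun i =>
    hW.exists_le_eigenspace ((LinearMap.isSymmetric_iff_isSelfAdjoint _).mpr
        (.mul_of_mem_skewAdjoint (hskew i) (hskew i₀) (hcomm i i₀)))
      (fun w hw => hWinv i (hWinv i₀ hw)) (fun j => (hcomm i j).mul_left (hcomm i₀ j))
  choose d hd using hd
  have heig : ∀ i, ∀ w ∈ W, T i (T i₀ w) = d i • w := fun i w hw =>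
    mem_eigenspace_iff.mp (hd i hw)
  set c := d i₀
  have hc : c < 0 := by
    have hpos : 0 < ⟪T i₀ w₀, T i₀ w₀⟫ := real_inner_self_pos.mpr hTw₀
    have hw₀_pos : 0 < ⟪w₀, w₀⟫ := real_inner_self_pos.mpr fun h => hTw₀ (by rw [h, map_zero])
    rw [inner_map_eq_neg_of_mem_skewAdjoint (hskew i₀), heig i₀ w₀ hw₀, real_inner_smul_right]
      at hpos
    nlinarith
  set s := √(-c)
  have hs : s * s = -c := Real.mul_self_sqrt (by linarith)
  have hs0 : s ≠ 0 := (Real.sqrt_pos.mpr (by linarith)).ne'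
  refine ⟨s⁻¹ • T i₀, skewAdjoint.smul_mem _ (hskew i₀), fun w hw => W.smul_mem _ (hWinv i₀ hw),
    fun w hw => ?_, fun i => d i / c * s, fun i w hw => ?_⟩
  · rw [LinearMap.smul_apply, LinearMap.smul_apply, map_smul, heig i₀ w hw, smul_smul, smul_smul,
      ← neg_one_smul ℝ w]
    congr 1
    field_simp
    linarith
  · have hw' : w = c⁻¹ • T i₀ (T i₀ w) := by
      rw [heig i₀ w hw, smul_smul, inv_mul_cancel₀ hc.ne, one_smul]
    calc T i w = T i (c⁻¹ • T i₀ (T i₀ w)) := congrArg (T i) hw'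
      _ = (d i / c * s) • s⁻¹ • T i₀ w := by
        rw [map_smul, heig i _ (hWinv i₀ hw), smul_smul, smul_smul]
        congr 1
        field_simp

lemma IsMinimalInvariant.exists_rotationGenerator (hskew : ∀ i, T i ∈ skewAdjoint (End ℝ E))
    (hcomm : ∀ i j, Commute (T i) (T j)) (hW : IsMinimalInvariant T W) {i₀ : ι} {w₀ : E}
    (hw₀ : w₀ ∈ W) (hTw₀ : T i₀ w₀ ≠ 0) :
    ∃ x ∈ W, ∃ y ∈ W, Orthonormal ℝ ![x, y] ∧
      ∃ μ : ι → ℝ, ∀ i, EqOn (T i) ⇑(μ i • rotationGenerator x y) W := by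
  obtain ⟨J, hJ, hJW, hJJ, a, ha⟩ := hW.exists_complexStructure hskew hcomm hw₀ hTw₀
  have hw₀_ne : w₀ ≠ 0 := fun h => hTw₀ (by rw [h, map_zero])
  set x := ‖w₀‖⁻¹ • w₀
  have hx : x ∈ W := W.smul_mem _ hw₀
  have hon : Orthonormal ℝ ![x, J x] :=
    orthonormal_pair_of_mem_skewAdjoint hJ (norm_smul_inv_norm hw₀_ne) (hJJ x hx)
  have hspan : ∀ i, EqOn (T i) ⇑(a i • rotationGenerator x (J x)) (span ℝ {x, J x}) := by
    refine fun i => LinearMap.eqOn_span' ?_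
    rintro v (rfl | rfl)
    · rw [ha i hx, LinearMap.smul_apply, LinearMap.smul_apply, rotationGenerator_apply_left hon]
    · rw [ha i (hJW hx), LinearMap.smul_apply, LinearMap.smul_apply, hJJ x hx,
        rotationGenerator_apply_right hon]
  have hW_le : W ≤ span ℝ {x, J x} := by
    refine hW.2 ⟨?_, fun i v hv => ?_⟩ (span_le.mpr ?_)
    · exact (Submodule.ne_bot_iff _).mpr ⟨x, subset_span (by simp), hon.ne_zero 0⟩
    · rw [mem_comap, hspan i hv]
      exact smul_mem _ _ (rotationGenerator_apply_mem_span _ _ _)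
    · rintro v (rfl | rfl)
      exacts [hx, hJW hx]
  exact ⟨x, hx, J x, hJW hx, hon, a, fun i => (hspan i).mono hW_le⟩

lemma exists_rotationGenerator_sum_eqOn (hskew : ∀ i, T i ∈ skewAdjoint (End ℝ E))
    (hcomm : ∀ i j, Commute (T i) (T j)) (V : Submodule ℝ E)
    (hV : ∀ i, V ∈ invtSubmodule (T i)) :
    ∃ (r : ℕ) (x y : Fin r → E) (μ : ι → Fin r → ℝ), Orthonormal ℝ (Sum.elim x y) ∧
      (∀ α, x α ∈ V ∧ y α ∈ V) ∧
      ∀ i, EqOn (T i) ⇑(∑ α, μ i α • rotationGenerator (x α) (y α)) V := by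
  induction V using WellFoundedLT.induction with | _ V ih => ?_
  rcases eq_or_ne V ⊥ with rfl | hV_ne
  · refine ⟨0, finZeroElim, finZeroElim, fun _ => finZeroElim, .of_isEmpty _, finZeroElim,
      fun i v hv => ?_⟩
    simp [(mem_bot ℝ).mp hv]
  obtain ⟨W, hWV, hW⟩ := exists_isMinimalInvariant_le hV_ne hV
  set V' := Wᗮ ⊓ V
  have hV'_inv : ∀ i, V' ∈ invtSubmodule (T i) := fun i =>
    (invtSubmodule (T i)).infClosed
      (orthogonal_mem_invtSubmodule_of_mem_skewAdjoint (hskew i) (hW.prop.2 i)) (hV i)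
  obtain ⟨r, x', y', μ', hon', hmem', heq'⟩ :=
    ih V' (orthogonal_inf_lt hWV hW.prop.1) hV'_inv
  have hx'W : ∀ α, x' α ∈ Wᗮ := fun α => (hmem' α).1.1
  have hy'W : ∀ α, y' α ∈ Wᗮ := fun α => (hmem' α).2.1
  have hmemV : ∀ α, x' α ∈ V ∧ y' α ∈ V := fun α => ⟨(hmem' α).1.2, (hmem' α).2.2⟩
  have hV_eq : W ⊔ V' = V := sup_orthogonal_inf_of_hasOrthogonalProjection hWV
  by_cases hW0 : ∀ i, EqOn (T i) 0 W
  · refine ⟨r, x', y', μ', hon', hmemV, fun i => ?_⟩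
    rw [← hV_eq, ← zero_add (∑ α, _)]
    exact LinearMap.eqOn_add_of_eqOn_sup (hW0 i) (heq' i) (fun _ _ => rfl)
      (sum_rotationGenerator_eqOn_zero hx'W hy'W _)
  obtain ⟨i₀, w₀, hw₀, hTw₀⟩ : ∃ i, ∃ w ∈ W, T i w ≠ 0 := by simpa [EqOn] using hW0
  obtain ⟨x, hx, y, hy, hon, μ, heq⟩ := hW.exists_rotationGenerator hskew hcomm hw₀ hTw₀
  have hxV' : x ∈ V'ᗮ := orthogonal_le inf_le_left (le_orthogonal_orthogonal W hx)
  have hyV' : y ∈ V'ᗮ := orthogonal_le inf_le_left (le_orthogonal_orthogonal W hy)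
  refine ⟨r + 1, Fin.cons x x', Fin.cons y y', fun i => Fin.cons (μ i) (μ' i),
    hon.sumElim_cons hon' hx hy hx'W hy'W, Fin.cases ⟨hWV hx, hWV hy⟩ hmemV, fun i => ?_⟩
  rw [Fin.sum_univ_succ, ← hV_eq]
  simp only [Fin.cons_zero, Fin.cons_succ]
  exact LinearMap.eqOn_add_of_eqOn_sup (heq i) (heq' i)
    (fun v hv => by simp [rotationGenerator_eqOn_zero hxV' hyV' hv])
    (sum_rotationGenerator_eqOn_zero hx'W hy'W _)

theorem exists_rotationGenerator_sum (hskew : ∀ i, T i ∈ skewAdjoint (End ℝ E))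
    (hcomm : ∀ i j, Commute (T i) (T j)) :
    ∃ (r : ℕ) (x y : Fin r → E) (μ : ι → Fin r → ℝ), Orthonormal ℝ (Sum.elim x y) ∧
      ∀ i, T i = ∑ α, μ i α • rotationGenerator (x α) (y α) := by
  obtain ⟨r, x, y, μ, hon, -, heq⟩ :=
    exists_rotationGenerator_sum_eqOn hskew hcomm ⊤ fun _ _ _ => mem_top
  exact ⟨r, x, y, μ, hon, fun i => LinearMap.ext fun _ => heq i mem_top⟩

end SkewAdjoint

section Matrix

open WithLp

variable {n : Type*} [Fintype n]

lemma EuclideanSpace.orthonormal_iff_dotProduct {κ : Type*} [DecidableEq κ]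
    {v : κ → EuclideanSpace ℝ n} :
    Orthonormal ℝ v ↔ ∀ p q, ofLp (v p) ⬝ᵥ ofLp (v q) = if p = q then 1 else 0 := by
  simp [orthonormal_iff_ite, EuclideanSpace.inner_eq_star_dotProduct, dotProduct_comm]

variable [DecidableEq n]

lemma Matrix.toEuclideanLin_mem_skewAdjoint {A : Matrix n n ℝ} (hA : Aᵀ = -A) :
    toEuclideanLin A ∈ skewAdjoint (End ℝ (EuclideanSpace ℝ n)) := by
  rw [skewAdjoint.mem_iff, LinearMap.star_eq_adjoint, ← toEuclideanLin_conjTranspose_eq_adjoint,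
    conjTranspose_eq_transpose_of_trivial, hA, map_neg]

lemma Matrix.commute_toEuclideanLin {A B : Matrix n n ℝ} (h : Commute A B) :
    Commute (toEuclideanLin A) (toEuclideanLin B) := by
  ext v : 1
  simp only [Module.End.mul_apply, toLpLin_apply, mulVec_mulVec, h.eq]

lemma Matrix.toEuclideanLin_vecMulVec_sub (x y : n → ℝ) :
    toEuclideanLin (vecMulVec y x - vecMulVec x y) = rotationGenerator (toLp 2 x) (toLp 2 y) := by
  ext v i
  simp [rotationGenerator_apply, vecMulVec_mulVec, EuclideanSpace.inner_eq_star_dotProduct]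
  rw [dotProduct_comm x, dotProduct_comm y]
  ring

end Matrix

/-- Simultaneous normal form for pairwise commuting real antisymmetric matrices:
all `L_Λ` are sums of rotation generators in `r` common orthonormal 2-planes, and if
the `L_Λ` are linearly independent then so are the rows of the coefficient matrix,
whence `m ≤ r ≤ ⌊n/2⌋`. -/
theorem commuting_antisymmetric_simultaneous_normal_form
    (n m : ℕ) (L : Fin m → Matrix (Fin n) (Fin n) ℝ)
    (hskew : ∀ Λ, (L Λ)ᵀ = -(L Λ))
    (hcomm : ∀ Λ Γ, L Λ * L Γ = L Γ * L Λ) :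
    ∃ (r : ℕ) (x y : Fin r → (Fin n → ℝ)) (lam : Fin m → Fin r → ℝ),
      2 * r ≤ n ∧
      (∀ p q : Fin r ⊕ Fin r,
        Sum.elim x y p ⬝ᵥ Sum.elim x y q = if p = q then 1 else 0) ∧
      (∀ Λ, L Λ = ∑ α, lam Λ α • (vecMulVec (y α) (x α) - vecMulVec (x α) (y α))) ∧
      (LinearIndependent ℝ L →
        LinearIndependent ℝ lam ∧ m ≤ r ∧ r ≤ n / 2) := by
  obtain ⟨r, X, Y, lam, hon, hT⟩ := exists_rotationGenerator_sum
    (fun Λ => toEuclideanLin_mem_skewAdjoint (hskew Λ)) fun Λ Γ =>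
      commute_toEuclideanLin (hcomm Λ Γ)
  have hL (Λ) : L Λ = ∑ α, lam Λ α •
      (vecMulVec (Y α).ofLp (X α).ofLp - vecMulVec (X α).ofLp (Y α).ofLp) :=
    toEuclideanLin.injective (by simp [hT Λ, toEuclideanLin_vecMulVec_sub])
  have hr : 2 * r ≤ n := by
    simpa [two_mul] using hon.linearIndependent.fintype_card_le_finrank
  refine ⟨r, fun α => (X α).ofLp, fun α => (Y α).ofLp, lam, hr, fun p q => ?_, hL,
    fun hind => ?_⟩
  · have := EuclideanSpace.orthonormal_iff_dotProduct.mp hon p q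
    rcases p <;> rcases q <;> exact this
  · have hlam := hind.of_eq_linearCombination hL
    exact ⟨hlam, by simpa using hlam.fintype_card_le_finrank, by omega⟩
end

section
/- There is no topological space O such that ℝ × (ℝ⁴ ∖ {0}) (where ℝ⁴ ∖ {0} carries the subspace topology from Euclidean ℝ⁴) is homeomorphic to O × (ℝ × Circle), where Circle denotes the unit circle {z ∈ ℂ : |z| = 1} with its subspace topology. -/
/-!
A loop in `E ∖ {0}` is homotopic, by straight lines, to a polygon through finitely many of its
points. The polygon lies in finitely many planes; when `dim E ≥ 3` some direction `z` lies in none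
of them, so the polygon avoids the closed ray `ℝ≤0 • z`, whose complement is star-shaped about
`z`. Hence `E ∖ {0}` is simply connected, and so is `ℝ × (ℝ⁴ ∖ {0})`. A factor of a simply
connected product is simply connected, whereas lifting the loop `t ↦ exp (2πit)` through the
covering `ℝ → Circle` shows that the circle is not.
-/

open Set unitInterval

def tent (x : ℝ) : ℝ := max 0 (1 - |x|)

theorem continuous_tent : Continuous tent := by unfold tent; fun_prop

theorem tent_eq_zero {x : ℝ} (h : 1 ≤ |x|) : tent x = 0 := max_eq_left (by linarith)

theorem tent_eq_one_sub_abs {x : ℝ} (h : x ∈ Icc (-1) 1) : tent x = 1 - |x| :=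
  max_eq_right (by linarith [abs_le.mpr h])

section Polygon

variable {E : Type*} [AddCommGroup E] [Module ℝ E]

/-- `tent (N * t - j)` is the hat function of the node `j / N`, so `polygon f N` interpolates `f`
linearly between consecutive nodes. -/
noncomputable def polygon (f : ℝ → E) (N : ℕ) (t : ℝ) : E :=
  ∑ j ∈ Finset.range (N + 1), tent (N * t - j) • f (j / N)

theorem polygon_eq_lineMap (f : ℝ → E) {N k : ℕ} {t : ℝ} (hk : k < N) (hkt : (k : ℝ) ≤ N * t)
    (htk : N * t ≤ k + 1) :
    polygon f N t = AffineMap.lineMap (f (k / N)) (f ((k + 1) / N)) (N * t - k) := by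
  have hsub : {k, k + 1} ⊆ Finset.range (N + 1) := by
    intro j hj; simp only [Finset.mem_insert, Finset.mem_singleton] at hj
    rw [Finset.mem_range]; omega
  rw [polygon, ← Finset.sum_subset hsub, Finset.sum_pair (by omega),
    AffineMap.lineMap_apply_module, tent_eq_one_sub_abs ⟨by linarith, by linarith⟩,
    tent_eq_one_sub_abs ⟨by push_cast; linarith, by push_cast; linarith⟩,
    abs_of_nonneg (by linarith), abs_of_nonpos (by push_cast; linarith)]
  · push_cast; congr 1; congr 1; ring
  · intro j _ hj
    simp only [Finset.mem_insert, Finset.mem_singleton, not_or] at hj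
    rw [tent_eq_zero, zero_smul]
    rcases Nat.lt_or_ge j k with h | h
    · have : (j : ℝ) + 1 ≤ k := by exact_mod_cast h
      rw [le_abs]; left; linarith
    · have : (k : ℝ) + 2 ≤ j := by exact_mod_cast (show k + 2 ≤ j by omega)
      rw [le_abs]; right; linarith

theorem exists_nat_le_mul_le {N : ℕ} (hN : 0 < N) {t : ℝ} (ht : t ∈ Icc (0 : ℝ) 1) :
    ∃ k < N, (k : ℝ) ≤ N * t ∧ N * t ≤ k + 1 := by
  have h0 : 0 ≤ (N : ℝ) * t := mul_nonneg N.cast_nonneg ht.1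
  have hN' : (N : ℝ) * t ≤ N := mul_le_of_le_one_right N.cast_nonneg ht.2
  rcases lt_or_eq_of_le hN' with hlt | heq
  · refine ⟨⌊(N : ℝ) * t⌋₊, ?_, Nat.floor_le h0, (Nat.lt_floor_add_one _).le⟩
    exact (Nat.floor_lt h0).mpr hlt
  · refine ⟨N - 1, by omega, ?_, ?_⟩ <;> rw [heq, Nat.cast_pred hN] <;> linarith

theorem polygon_zero (f : ℝ → E) {N : ℕ} (hN : 0 < N) : polygon f N 0 = f 0 := by
  rw [polygon_eq_lineMap f (k := 0) hN (by simp) (by simp)]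
  simp

theorem polygon_one (f : ℝ → E) {N : ℕ} (hN : 0 < N) : polygon f N 1 = f 1 := by
  rw [polygon_eq_lineMap f (k := N - 1) (by omega) (by simp) (by simp [Nat.cast_pred hN])]
  simp [Nat.cast_pred hN, (Nat.cast_pos.mpr hN).ne']

theorem exists_polygon_mem_segment (f : ℝ → E) {N : ℕ} (hN : 0 < N) {t : ℝ}
    (ht : t ∈ Icc (0 : ℝ) 1) :
    ∃ k < N, t ∈ Icc (k / N : ℝ) ((k + 1) / N) ∧
      polygon f N t ∈ segment ℝ (f (k / N)) (f ((k + 1) / N)) := by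
  obtain ⟨k, hk, hkt, htk⟩ := exists_nat_le_mul_le hN ht
  have hN' : (0 : ℝ) < N := Nat.cast_pos.mpr hN
  refine ⟨k, hk, ⟨(div_le_iff₀' hN').mpr hkt, (le_div_iff₀' hN').mpr htk⟩, ?_⟩
  rw [polygon_eq_lineMap f hk hkt htk]
  exact lineMap_mem_segment ℝ _ _ ⟨by linarith, by linarith⟩

variable [TopologicalSpace E] [IsTopologicalAddGroup E] [ContinuousSMul ℝ E]

theorem continuous_polygon (f : ℝ → E) (N : ℕ) : Continuous (polygon f N) := by
  unfold polygon
  have := continuous_tent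
  fun_prop

end Polygon

theorem dist_polygon_lt {E : Type*} [SeminormedAddCommGroup E] [NormedSpace ℝ E] {f : ℝ → E}
    {ε δ : ℝ} (hf : ∀ a b, dist a b < δ → dist (f a) (f b) < ε) {N : ℕ} (hN : 0 < N)
    (hNδ : 1 / N < δ) {t : ℝ} (ht : t ∈ Icc (0 : ℝ) 1) : dist (polygon f N t) (f t) < ε := by
  obtain ⟨k, -, ⟨hkt, htk⟩, hseg⟩ := exists_polygon_mem_segment f hN ht
  have hstep : ((k : ℝ) + 1) / N - k / N = 1 / N := by ring
  have hclose : ∀ s ∈ Icc (k / N : ℝ) ((k + 1) / N), f s ∈ Metric.ball (f t) ε := fun s hs =>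
    hf s t (by rw [Real.dist_eq, abs_lt]; constructor <;> linarith [hs.1, hs.2])
  exact (convex_ball _ _).segment_subset (hclose _ (left_mem_Icc.mpr (by linarith)))
    (hclose _ (right_mem_Icc.mpr (by linarith))) hseg

theorem Path.homotopic_of_forall_mem {X : Type*} [TopologicalSpace X] {s t : Set X} (hst : s ⊆ t)
    [SimplyConnectedSpace s] {x y : t} (p q : Path x y) (hp : ∀ τ, (p τ : X) ∈ s)
    (hq : ∀ τ, (q τ : X) ∈ s) : p.Homotopic q := by
  let lift (γ : Path x y) (hγ : ∀ τ, (γ τ : X) ∈ s) :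
      Path (⟨x, by simpa using hγ 0⟩ : s) ⟨y, by simpa using hγ 1⟩ :=
    { toFun := fun τ => ⟨γ τ, hγ τ⟩
      source' := by simp
      target' := by simp }
  exact ContinuousMap.HomotopicRel.comp_continuousMap
    (SimplyConnectedSpace.paths_homotopic (lift p hp) (lift q hq))
    ⟨inclusion hst, continuous_inclusion hst⟩

theorem Path.homotopic_of_segment_subset {E : Type*} [AddCommGroup E] [Module ℝ E]
    [TopologicalSpace E] [IsTopologicalAddGroup E] [ContinuousSMul ℝ E] {s : Set E} {x y : s}
    (p q : Path x y) (h : ∀ τ, segment ℝ (p τ : E) (q τ) ⊆ s) : p.Homotopic q := by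
  refine ⟨{ toFun := fun st => ⟨AffineMap.lineMap (p st.2 : E) (q st.2) (st.1 : ℝ),
              h st.2 (lineMap_mem_segment ℝ _ _ st.1.2)⟩
            continuous_toFun := ?_
            map_zero_left := ?_
            map_one_left := ?_
            prop' := ?_ }⟩
  · simp only [AffineMap.lineMap_apply_module]; fun_prop
  · intro; simp
  · intro; simp
  · rintro r τ (rfl | rfl) <;> simp

theorem starConvex_compl_ray {E : Type*} [AddCommGroup E] [Module ℝ E] {z : E} (hz : z ≠ 0) :
    StarConvex ℝ z ((fun c : ℝ => c • z) '' Iic 0)ᶜ := by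
  rintro v hv a b ha hb hab ⟨c, hc, hcv⟩
  rcases hb.eq_or_lt with rfl | hb
  · rw [add_zero] at hab
    subst hab
    simp only [zero_smul, add_zero, one_smul] at hcv
    have : (c - 1) • z = 0 := by rw [sub_smul, one_smul, hcv, sub_self]
    exact (smul_eq_zero.mp this).elim (fun h => by linarith [mem_Iic.mp hc]) hz
  · refine hv ⟨(c - a) / b, div_nonpos_of_nonpos_of_nonneg (by linarith [mem_Iic.mp hc]) hb.le, ?_⟩
    simp only at hcv ⊢
    rw [div_eq_inv_mul, mul_smul, sub_smul, hcv, add_sub_cancel_left, smul_smul,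
      inv_mul_cancel₀ hb.ne', one_smul]

theorem exists_forall_notMem_span_pair {K V ι : Type*} [DivisionRing K] [Infinite K]
    [AddCommGroup V] [Module K V] [Finite ι] (a b : ι → V) (hV : 2 < Module.rank K V) :
    ∃ z : V, ∀ i, z ∉ Submodule.span K {a i, b i} := by
  by_contra! h
  obtain ⟨i, hi⟩ := Subspace.exists_eq_top_of_iUnion_eq_univ
    (p := fun i => Submodule.span K {a i, b i}) (eq_univ_of_forall fun z => mem_iUnion.mpr (h z))
  have hrank := rank_span_le (R := K) ({a i, b i} : Set V)
  rw [hi, rank_top] at hrank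
  have hcard : Cardinal.mk ({a i, b i} : Set V) ≤ 2 := by
    refine (Cardinal.mk_insert_le).trans ?_
    rw [Cardinal.mk_singleton, one_add_one_eq_two]
  exact (hrank.trans hcard).not_gt hV

theorem Path.exists_homotopic_forall_mem_span_pair {E : Type*} [NormedAddCommGroup E]
    [NormedSpace ℝ E] {x y : ({0}ᶜ : Set E)} (γ : Path x y) :
    ∃ (ℓ : Path x y) (N : ℕ) (a b : Fin N → E), γ.Homotopic ℓ ∧
      ∀ τ, ∃ k, (ℓ τ : E) ∈ Submodule.span ℝ {a k, b k} := by
  let f : ℝ → E := fun t => γ.extend t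
  obtain ⟨τ₀, -, hτ₀⟩ := isCompact_univ.exists_isMinOn univ_nonempty
    (continuous_norm.comp (continuous_subtype_val.comp γ.continuous)).continuousOn
  have hm : 0 < ‖(γ τ₀ : E)‖ := norm_pos_iff.mpr (γ τ₀).2
  obtain ⟨δ, hδ, hfδ⟩ := Metric.uniformContinuous_iff.mp
    (uniformContinuous_subtype_val.comp γ.uniformContinuous_extend) _ hm
  obtain ⟨n, hn⟩ := exists_nat_one_div_lt hδ
  have hN : 0 < n + 1 := n.succ_pos
  have happrox (τ : I) : polygon f (n + 1) τ ∈ Metric.ball (γ τ : E) ‖(γ τ : E)‖ := by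
    have := dist_polygon_lt (f := f) hfδ hN (by exact_mod_cast hn) τ.2
    rw [show f τ = γ τ by simp [f]] at this
    exact this.trans_le (hτ₀ (mem_univ τ))
  have hball (τ : I) : Metric.ball (γ τ : E) ‖(γ τ : E)‖ ⊆ {0}ᶜ := by
    rintro v hv rfl
    simp at hv
  let ℓ : Path x y :=
    { toFun := fun τ => ⟨polygon f (n + 1) τ, hball τ (happrox τ)⟩
      continuous_toFun := ((continuous_polygon f _).comp continuous_subtype_val).subtype_mk _
      source' := Subtype.ext (by simp [polygon_zero f hN, f])
      target' := Subtype.ext (by simp [polygon_one f hN, f]) }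
  refine ⟨ℓ, n + 1, fun k => f (k / (n + 1 : ℕ)), fun k => f ((k + 1) / (n + 1 : ℕ)),
    γ.homotopic_of_segment_subset ℓ fun τ => ?_, fun τ => ?_⟩
  · exact ((convex_ball _ _).segment_subset (Metric.mem_ball_self (hm.trans_le (hτ₀ (mem_univ τ))))
      (happrox τ)).trans (hball τ)
  · obtain ⟨k, hk, -, a, b, -, -, -, hab⟩ := exists_polygon_mem_segment f hN τ.2
    refine ⟨⟨k, hk⟩, ?_⟩
    rw [show (ℓ τ : E) = polygon f (n + 1) τ from rfl, ← hab]
    exact add_mem (Submodule.smul_mem _ _ (Submodule.subset_span (by simp)))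
      (Submodule.smul_mem _ _ (Submodule.subset_span (by simp)))

theorem simplyConnectedSpace_ne_zero {E : Type*} [NormedAddCommGroup E] [NormedSpace ℝ E]
    (hE : 2 < Module.rank ℝ E) : SimplyConnectedSpace {x : E // x ≠ 0} := by
  have hpc : PathConnectedSpace ({0}ᶜ : Set E) := isPathConnected_iff_pathConnectedSpace.mp
    (isPathConnected_compl_singleton_of_one_lt_rank
      ((by norm_num : (1 : Cardinal) < 2).trans hE) 0)
  show SimplyConnectedSpace ({0}ᶜ : Set E)
  refine simply_connected_iff_loops_nullhomotopic.mpr ⟨hpc, fun x γ => ?_⟩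
  obtain ⟨ℓ, N, a, b, hγℓ, hℓ⟩ := γ.exists_homotopic_forall_mem_span_pair
  obtain ⟨z, hz⟩ := exists_forall_notMem_span_pair a b hE
  have hz0 : z ≠ 0 := fun h => hz (hℓ 0).choose (by rw [h]; exact zero_mem _)
  have hsub : ((fun c : ℝ => c • z) '' Iic 0)ᶜ ⊆ {0}ᶜ :=
    compl_subset_compl.mpr (singleton_subset_iff.mpr ⟨0, mem_Iic.mpr le_rfl, zero_smul ℝ z⟩)
  have hℓray (τ : I) : (ℓ τ : E) ∈ ((fun c : ℝ => c • z) '' Iic 0)ᶜ := by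
    rintro ⟨c, -, hc⟩
    obtain ⟨k, hk⟩ := hℓ τ
    have hc0 : c ≠ 0 := by rintro rfl; exact (ℓ τ).2 (by simpa using hc.symm)
    exact hz k (by simpa [← hc, smul_smul, hc0] using Submodule.smul_mem _ c⁻¹ hk)
  have := (starConvex_compl_ray hz0).contractibleSpace ⟨_, hℓray 0⟩
  exact hγℓ.trans
    (Path.homotopic_of_forall_mem hsub ℓ (.refl x) hℓray fun _ => ℓ.source ▸ hℓray 0)

section SimplyConnected

variable {X Y : Type*} [TopologicalSpace X] [TopologicalSpace Y]

theorem SimplyConnectedSpace.of_leftInverse [SimplyConnectedSpace Y] (i : C(X, Y)) (r : C(Y, X))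
    (h : Function.LeftInverse r i) : SimplyConnectedSpace X := by
  have : PathConnectedSpace X := h.surjective.pathConnectedSpace r.continuous
  refine simply_connected_iff_paths_homotopic'.mpr ⟨this, fun {x y} p q => ?_⟩
  have := ContinuousMap.HomotopicRel.comp_continuousMap
    (SimplyConnectedSpace.paths_homotopic (p.map i.continuous) (q.map i.continuous)) r
  have hr (γ : Path x y) : r.comp (γ.map i.continuous).toContinuousMap = γ.toContinuousMap := by
    ext; simp [h _]
  rwa [hr, hr] at this

instance SimplyConnectedSpace.prod [SimplyConnectedSpace X] [SimplyConnectedSpace Y] :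
    SimplyConnectedSpace (X × Y) := by
  refine simply_connected_iff_paths_homotopic'.mpr ⟨inferInstance, fun p q => ?_⟩
  have h₁ := SimplyConnectedSpace.paths_homotopic (p.map continuous_fst) (q.map continuous_fst)
  have h₂ := SimplyConnectedSpace.paths_homotopic (p.map continuous_snd) (q.map continuous_snd)
  exact ⟨h₁.some.prod h₂.some⟩

theorem SimplyConnectedSpace.of_prod_right [SimplyConnectedSpace (X × Y)] :
    SimplyConnectedSpace Y :=
  have : Nonempty X := .map Prod.fst (inferInstance : Nonempty (X × Y))
  .of_leftInverse (.prodMk (.const Y (Classical.arbitrary X)) (.id Y)) .snd fun _ => rfl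

end SimplyConnected

theorem Circle.not_simplyConnectedSpace : ¬ SimplyConnectedSpace Circle := by
  intro _
  let loop : Path (1 : Circle) 1 :=
    { toFun := fun t => Circle.exp (2 * Real.pi * t)
      source' := by simp
      target' := by simp }
  have hlift : (fun t : I => 2 * Real.pi * t) =
      Circle.isCoveringMap_exp.liftPath loop.toContinuousMap 0 (by simp) :=
    (Circle.isCoveringMap_exp.eq_liftPath_iff _).mpr ⟨by fun_prop, rfl, by simp⟩
  have h := Circle.isCoveringMap_exp.liftPath_apply_one_eq_of_homotopicRel (γ₁ := .const I 1)
    (SimplyConnectedSpace.paths_homotopic loop (Path.refl 1)) 0 (by simp) (by simp)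
  rw [← hlift, Circle.isCoveringMap_exp.liftPath_const] at h
  simp [Real.pi_ne_zero] at h

universe u

/-- There is no topological space `O` such that `ℝ × (ℝ⁴ ∖ {0})` is homeomorphic
to `O × (ℝ × U(1))`. -/
theorem no_trivial_product_structure
    (O : Type u) [TopologicalSpace O] :
    IsEmpty ((ℝ × {x : EuclideanSpace ℝ (Fin 4) // x ≠ 0}) ≃ₜ (O × (ℝ × Circle))) := by
  refine ⟨fun e => Circle.not_simplyConnectedSpace ?_⟩
  have : SimplyConnectedSpace {x : EuclideanSpace ℝ (Fin 4) // x ≠ 0} :=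
    simplyConnectedSpace_ne_zero (by norm_num [← Module.finrank_eq_rank])
  have : SimplyConnectedSpace (O × (ℝ × Circle)) := e.symm.toHomotopyEquiv.simplyConnectedSpace
  have : SimplyConnectedSpace (ℝ × Circle) := .of_prod_right (X := O)
  exact .of_prod_right (X := ℝ)
end
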